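/- If (X,T) is expansive with constant δ, has non-uniform transitivity with gap bounds f(n) at scale δ/3, φ is a potential with partial sum variation bounds g(n), and C > 0, M ≥ 3 satisfy f(n)+g(n) ≤ min(C·ln n, n) for all n ≥ M, then for all n ≥ M: Z(X,T,φ,n,δ) ≤ D · e^{n·P(X,T,φ)} · n^{CE}, where D, E are constants depending only on X and φ. -/

import Mathlib

/-!
For an `(n, δ)`-separated set `S`, non-uniform transitivity assigns to each pair `(x, y) ∈ S × S`
a point `z` that `δ/3`-shadows `x` and then, after a gap `i ≤ f n`, `y`. Points with the same gap
are `(2n + i, δ/3)`-separated, and the variation bound gives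
`S_n φ(x) + S_n φ(y) ≤ S_{2n+i} φ(z) + 2 g(n) + i ‖φ‖`. Expansivity upgrades `δ/3`-separation to
`δ`-separation at the cost of `2N` extra iterates, so `Z_n² ≤ n^{O(C)} Z_{2n+j}` with
`j = O(C log n)`. Iterating along `n, 2n + j(n), …` and dividing the `k`-th inequality by `2^k`,
the logarithmic errors add up to `O(log n)`, while `log Z_{m_k} / 2^k → n P + O(log n)` because
`m_k / 2^k` stays within `O(log n)` of `n`.
-/

open Filter Topology MeasureTheory

/-- Non-uniform transitivity with gap bounds `f` at scale `η`. -/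
def NonUnifTrans {X : Type*} [MetricSpace X] (T : X → X) (f : ℕ → ℕ) (η : ℝ) : Prop :=
  ∀ (n : ℕ) (x y : X), ∃ i ≤ f n, ∃ z : X,
    (∀ l < n, dist (T^[l] z) (T^[l] x) < η) ∧
    (∀ l < n, dist (T^[n + i + l] z) (T^[l] y) < η)

/-- Expansivity with constant `δ`: some `ℤ`-iterate separates any two distinct points by more than `δ`. -/
def Expansive {X : Type*} [MetricSpace X] [CompactSpace X] (T : X ≃ₜ X) (δ : ℝ) : Prop :=
  ∀ x y : X, x ≠ y → ∃ n : ℤ,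
    δ < dist (((T.toEquiv : Equiv.Perm X) ^ n) x) (((T.toEquiv : Equiv.Perm X) ^ n) y)

/-- Birkhoff partial sums `S_n φ`. -/
def birkhoff {X : Type*} (T : X → X) (φ : X → ℝ) (n : ℕ) (x : X) : ℝ :=
  ∑ i ∈ Finset.range n, φ (T^[i] x)

/-- `g` is a bound for the partial sum variations of `φ` at scale `η`:
`g n ≥ V(X,T,φ,i,η)` whenever `i ≤ n`. -/
def HasVarBounds {X : Type*} [MetricSpace X] (T : X → X) (φ : X → ℝ) (g : ℕ → ℝ) (η : ℝ) : Prop :=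
  ∀ n, ∀ i ≤ n, ∀ x y : X, (∀ j < i, dist (T^[j] x) (T^[j] y) < η) →
    |birkhoff T φ i x - birkhoff T φ i y| ≤ g n

/-- `S` is `(n, ε)`-separated. -/
def IsSep {X : Type*} [MetricSpace X] (T : X → X) (n : ℕ) (ε : ℝ) (S : Set X) : Prop :=
  ∀ x ∈ S, ∀ y ∈ S, x ≠ y → ∃ k < n, ε < dist (T^[k] x) (T^[k] y)

/-- The partition function `Z(X,T,φ,n,ε)`: the maximal value of `∑_{x ∈ S} e^{S_n φ(x)}`
over `(n,ε)`-separated sets `S`. -/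
noncomputable def partFn {X : Type*} [MetricSpace X] (T : X → X) (φ : X → ℝ) (n : ℕ) (ε : ℝ) : ℝ :=
  sSup {r | ∃ S : Finset X, IsSep T n ε ↑S ∧ r = ∑ x ∈ S, Real.exp (birkhoff T φ n x)}

section Birkhoff

variable {X : Type*} (T : X → X) (φ : X → ℝ)

lemma birkhoff_add (m n : ℕ) (x : X) :
    birkhoff T φ (m + n) x = birkhoff T φ m x + birkhoff T φ n (T^[m] x) := by
  rw [birkhoff, Finset.sum_range_add]
  congr 1
  refine Finset.sum_congr rfl fun l _ => ?_
  rw [← Function.iterate_add_apply, add_comm]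

lemma abs_birkhoff_le {K : ℝ} (hK : ∀ x, |φ x| ≤ K) (n : ℕ) (x : X) :
    |birkhoff T φ n x| ≤ n * K :=
  calc |birkhoff T φ n x| ≤ ∑ i ∈ Finset.range n, |φ (T^[i] x)| := Finset.abs_sum_le_sum_abs _ _
    _ ≤ ∑ _i ∈ Finset.range n, K := Finset.sum_le_sum fun _ _ => hK _
    _ = n * K := by simp

lemma birkhoff_le_birkhoff_add_add {K : ℝ} (hK : ∀ x, |φ x| ≤ K) (a m b : ℕ) (x : X) :
    birkhoff T φ m (T^[a] x) ≤ birkhoff T φ (a + m + b) x + (a + b) * K := by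
  have ha := abs_le.mp (abs_birkhoff_le T φ hK a x)
  have hb := abs_le.mp (abs_birkhoff_le T φ hK b (T^[a + m] x))
  rw [birkhoff_add, birkhoff_add]
  linarith

lemma HasVarBounds.nonneg [MetricSpace X] [Nonempty X] {g : ℕ → ℝ} {η : ℝ}
    (hg : HasVarBounds T φ g η) (n : ℕ) : 0 ≤ g n := by
  obtain ⟨x⟩ := ‹Nonempty X›
  simpa using hg n 0 n.zero_le x x (by simp)

end Birkhoff

section PartitionFunction

variable {X : Type*} [MetricSpace X] {T : X → X} {φ : X → ℝ} {n : ℕ} {ε : ℝ}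

lemma partFn_le_of_forall_sum_le {R : ℝ}
    (h : ∀ S : Finset X, IsSep T n ε ↑S → ∑ x ∈ S, Real.exp (birkhoff T φ n x) ≤ R) :
    partFn T φ n ε ≤ R :=
  csSup_le ⟨0, ∅, by simp [IsSep], by simp⟩ (by rintro r ⟨S, hS, rfl⟩; exact h S hS)

variable [CompactSpace X]

theorem exists_card_le_of_isSep (hT : Continuous T) (n : ℕ) (hε : 0 < ε) :
    ∃ B : ℕ, ∀ S : Finset X, IsSep T n ε ↑S → S.card ≤ B := by
  classical
  let orbit : X → (Fin n → X) := fun x k => T^[k] x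
  have hcpt : IsCompact (Set.range orbit) :=
    isCompact_range (continuous_pi fun k => hT.iterate k)
  obtain ⟨t, htfin, htcov⟩ :=
    Metric.totallyBounded_iff.mp hcpt.totallyBounded (ε / 2) (half_pos hε)
  have hnear : ∀ x, ∃ c ∈ t, dist (orbit x) c < ε / 2 := fun x => by
    simpa using htcov (Set.mem_range_self x)
  choose c hct hc using hnear
  refine ⟨htfin.toFinset.card, fun S hS => ?_⟩
  refine Finset.card_le_card_of_injOn c (fun x _ => htfin.mem_toFinset.mpr (hct x)) ?_
  intro x hx y hy hxy
  by_contra hne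
  obtain ⟨k, hk, hsep⟩ := hS x hx y hy hne
  have hclose : dist (orbit x) (orbit y) < ε := by
    have hcy := hc y
    rw [← hxy] at hcy
    linarith [hc x, dist_triangle_right (orbit x) (orbit y) (c x)]
  exact (hsep.trans_le (dist_le_pi_dist (orbit x) (orbit y) ⟨k, hk⟩)).not_gt hclose

variable {K : ℝ}

lemma partFn_bddAbove (hT : Continuous T) (hK : ∀ x, |φ x| ≤ K) (n : ℕ) (hε : 0 < ε) :
    BddAbove {r | ∃ S : Finset X, IsSep T n ε ↑S ∧ r = ∑ x ∈ S, Real.exp (birkhoff T φ n x)} := by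
  obtain ⟨B, hB⟩ := exists_card_le_of_isSep hT n hε
  refine ⟨B * Real.exp (n * K), ?_⟩
  rintro r ⟨S, hS, rfl⟩
  calc ∑ x ∈ S, Real.exp (birkhoff T φ n x) ≤ S.card • Real.exp (n * K) :=
        Finset.sum_le_card_nsmul _ _ _ fun x _ =>
          Real.exp_le_exp.mpr (abs_le.mp (abs_birkhoff_le T φ hK n x)).2
    _ ≤ B * Real.exp (n * K) := by
        rw [nsmul_eq_mul]
        gcongr
        exact_mod_cast hB S hS

lemma sum_le_partFn (hT : Continuous T) (hK : ∀ x, |φ x| ≤ K) (hε : 0 < ε) {S : Finset X}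
    (hS : IsSep T n ε ↑S) : ∑ x ∈ S, Real.exp (birkhoff T φ n x) ≤ partFn T φ n ε :=
  le_csSup (partFn_bddAbove hT hK n hε) ⟨S, hS, rfl⟩

lemma partFn_nonneg (hT : Continuous T) (hK : ∀ x, |φ x| ≤ K) (hε : 0 < ε) :
    0 ≤ partFn T φ n ε := by
  simpa using sum_le_partFn (S := ∅) hT hK hε (by simp [IsSep])

lemma partFn_pos [Nonempty X] (hT : Continuous T) (hK : ∀ x, |φ x| ≤ K) (n : ℕ) (hε : 0 < ε) :
    0 < partFn T φ n ε := by
  obtain ⟨x⟩ := ‹Nonempty X›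
  have hsep : IsSep T n ε ↑({x} : Finset X) := by
    intro y hy z hz hyz
    simp only [Finset.coe_singleton, Set.mem_singleton_iff] at hy hz
    exact absurd (hy.trans hz.symm) hyz
  have h := sum_le_partFn (φ := φ) hT hK hε hsep
  rw [Finset.sum_singleton] at h
  exact (Real.exp_pos _).trans_le h

lemma sum_comp_le_partFn {ι : Type*} (hT : Continuous T) (hK : ∀ x, |φ x| ≤ K) (hε : 0 < ε)
    (s : Finset ι) (F : ι → X)
    (hs : (s : Set ι).Pairwise fun p q => ∃ k < n, ε < dist (T^[k] (F p)) (T^[k] (F q))) :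
    ∑ p ∈ s, Real.exp (birkhoff T φ n (F p)) ≤ partFn T φ n ε := by
  classical
  have hinj : Set.InjOn F s := by
    intro p hp q hq hpq
    by_contra hne
    obtain ⟨k, -, hk⟩ := hs hp hq hne
    rw [hpq, dist_self] at hk
    exact hε.not_gt hk
  rw [← Finset.sum_image (f := fun x => Real.exp (birkhoff T φ n x)) hinj]
  refine sum_le_partFn hT hK hε ?_
  intro x hx y hy hxy
  simp only [Finset.coe_image, Set.mem_image, Finset.mem_coe] at hx hy
  obtain ⟨p, hp, rfl⟩ := hx
  obtain ⟨q, hq, rfl⟩ := hy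
  exact hs hp hq fun h => hxy (h ▸ rfl)

end PartitionFunction

lemma Homeomorph.perm_zpow_eq_iterate {X : Type*} [TopologicalSpace X] (T : X ≃ₜ X) {n : ℤ}
    {N : ℕ} (hn : -N ≤ n) :
    ⇑((T.toEquiv : Equiv.Perm X) ^ n) = (⇑T)^[(n + N).toNat] ∘ (⇑T.symm)^[N] := by
  have hsplit : (T.toEquiv : Equiv.Perm X) ^ n
      = (T.toEquiv : Equiv.Perm X) ^ (((n + N).toNat : ℕ) : ℤ) * T.toEquiv⁻¹ ^ N := by
    rw [Int.toNat_of_nonneg (by omega), ← zpow_natCast, inv_zpow', ← zpow_add]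
    ring_nf
  rw [hsplit, Equiv.Perm.coe_mul, zpow_natCast, ← Equiv.Perm.iterate_eq_pow,
    ← Equiv.Perm.iterate_eq_pow]
  rfl

section Expansivity

variable {X : Type*} [MetricSpace X] [CompactSpace X]

theorem Expansive.exists_iterate_sep {T : X ≃ₜ X} {δ ε : ℝ}
    (hexp : Expansive T δ) (hε : 0 < ε) :
    ∃ N : ℕ, ∀ x y : X, ε < dist x y →
      ∃ k ≤ 2 * N, δ < dist ((⇑T)^[k] ((⇑T.symm)^[N] x)) ((⇑T)^[k] ((⇑T.symm)^[N] y)) := by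
  let e : Equiv.Perm X := T.toEquiv
  have hcont : ∀ n : ℤ, Continuous ⇑(e ^ n) := fun n => by
    rw [T.perm_zpow_eq_iterate (N := n.natAbs) (by omega)]
    exact (T.continuous.iterate _).comp (T.symm.continuous.iterate _)
  let U : ℤ → Set (X × X) := fun n => {p | δ < dist ((e ^ n) p.1) ((e ^ n) p.2)}
  have hU : ∀ n, IsOpen (U n) := fun n =>
    isOpen_lt continuous_const
      (((hcont n).comp continuous_fst).dist ((hcont n).comp continuous_snd))
  have hcover : {p : X × X | ε ≤ dist p.1 p.2} ⊆ ⋃ n, U n := fun p hp =>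
    Set.mem_iUnion.mpr (hexp p.1 p.2 fun h => by simp [h] at hp; linarith)
  obtain ⟨s, hs⟩ := (isClosed_le continuous_const continuous_dist).isCompact.elim_finite_subcover
    U hU hcover
  refine ⟨s.sup Int.natAbs, fun x y hxy => ?_⟩
  obtain ⟨n, hns, hn⟩ := Set.mem_iUnion₂.mp (hs (a := (x, y)) hxy.le)
  have habs : n.natAbs ≤ s.sup Int.natAbs := Finset.le_sup hns
  refine ⟨(n + (s.sup Int.natAbs : ℕ)).toNat, by omega, ?_⟩
  have hiter := T.perm_zpow_eq_iterate (show -((s.sup Int.natAbs : ℕ) : ℤ) ≤ n by omega)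
  have hn : δ < dist ((e ^ n) x) ((e ^ n) y) := hn
  convert hn using 2 <;> exact (congrFun hiter _).symm

theorem Expansive.exists_partFn_le {T : X ≃ₜ X} {φ : X → ℝ} {δ ε K : ℝ} (hexp : Expansive T δ)
    (hδ : 0 < δ) (hε : 0 < ε) (hK : ∀ x, |φ x| ≤ K) :
    ∃ N : ℕ, ∀ m, partFn (⇑T) φ m ε ≤ Real.exp (2 * N * K) * partFn (⇑T) φ (m + 2 * N) δ := by
  obtain ⟨N, hN⟩ := hexp.exists_iterate_sep hε
  refine ⟨N, fun m => partFn_le_of_forall_sum_le fun S hS => ?_⟩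
  have hcomm : Function.Commute (⇑T) (⇑T.symm) := fun x => by simp
  have hsep : (S : Set X).Pairwise fun z z' => ∃ k < m + 2 * N,
      δ < dist ((⇑T)^[k] ((⇑T.symm)^[N] z)) ((⇑T)^[k] ((⇑T.symm)^[N] z')) := by
    intro z hz z' hz' hne
    obtain ⟨k₀, hk₀, h₀⟩ := hS z hz z' hz' hne
    obtain ⟨k, hk, h⟩ := hN _ _ h₀
    refine ⟨k + k₀, by omega, ?_⟩
    rwa [← (hcomm.iterate_iterate k₀ N) z, ← (hcomm.iterate_iterate k₀ N) z',
      ← Function.iterate_add_apply, ← Function.iterate_add_apply] at h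
  have hbirk : ∀ z, birkhoff (⇑T) φ m z
      ≤ 2 * N * K + birkhoff (⇑T) φ (m + 2 * N) ((⇑T.symm)^[N] z) := fun z => by
    have h := birkhoff_le_birkhoff_add_add (⇑T) φ hK N m N ((⇑T.symm)^[N] z)
    rw [(Function.LeftInverse.iterate T.apply_symm_apply N) z,
      show N + m + N = m + 2 * N by ring] at h
    linarith
  calc ∑ z ∈ S, Real.exp (birkhoff (⇑T) φ m z)
      ≤ ∑ z ∈ S, Real.exp (2 * N * K) *
          Real.exp (birkhoff (⇑T) φ (m + 2 * N) ((⇑T.symm)^[N] z)) :=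
        Finset.sum_le_sum fun z _ => by rw [← Real.exp_add]; exact Real.exp_le_exp.mpr (hbirk z)
    _ ≤ Real.exp (2 * N * K) * partFn (⇑T) φ (m + 2 * N) δ := by
        rw [← Finset.mul_sum]
        gcongr
        exact sum_comp_le_partFn T.continuous hK hδ S _ hsep

end Expansivity

section Shadowing

variable {X : Type*} [MetricSpace X] {T : X → X} {φ : X → ℝ} {g : ℕ → ℝ} {η ε K : ℝ}
  {n i : ℕ} {x y z : X}

def Shadows (T : X → X) (η : ℝ) (n i : ℕ) (z x y : X) : Prop :=
  (∀ l < n, dist (T^[l] z) (T^[l] x) < η) ∧ (∀ l < n, dist (T^[n + i + l] z) (T^[l] y) < η)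

lemma sub_two_mul_lt_dist {a b c d : X} (hab : ε < dist a b) (hc : dist c a < η)
    (hd : dist d b < η) : ε - 2 * η < dist c d := by
  have := dist_triangle4 a c d b
  rw [dist_comm a c] at this
  linarith

lemma Shadows.birkhoff_add_le (hK : ∀ x, |φ x| ≤ K) (hg : HasVarBounds T φ g η)
    (h : Shadows T η n i z x y) :
    birkhoff T φ n x + birkhoff T φ n y ≤ birkhoff T φ (2 * n + i) z + (2 * g n + i * K) := by
  have hx := abs_le.mp (hg n n le_rfl z x h.1)
  have hy := abs_le.mp (hg n n le_rfl (T^[n + i] z) y fun l hl => by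
    rw [← Function.iterate_add_apply, add_comm]
    exact h.2 l hl)
  have hgap := abs_le.mp (abs_birkhoff_le T φ hK i (T^[n] z))
  rw [show 2 * n + i = n + i + n by ring, birkhoff_add, birkhoff_add]
  linarith

lemma Shadows.exists_lt_dist {S : Finset X} (hS : IsSep T n ε ↑S) {x' y' z' : X}
    (hx : x ∈ S) (hy : y ∈ S) (hx' : x' ∈ S) (hy' : y' ∈ S) (hne : (x, y) ≠ (x', y'))
    (h : Shadows T η n i z x y) (h' : Shadows T η n i z' x' y') :
    ∃ k < 2 * n + i, ε - 2 * η < dist (T^[k] z) (T^[k] z') := by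
  by_cases hxx : x = x'
  · obtain ⟨k, hk, hsep⟩ := hS y hy y' hy' fun hyy => hne (by rw [hxx, hyy])
    exact ⟨n + i + k, by omega, sub_two_mul_lt_dist hsep (h.2 k hk) (h'.2 k hk)⟩
  · obtain ⟨k, hk, hsep⟩ := hS x hx x' hx' hxx
    exact ⟨k, by omega, sub_two_mul_lt_dist hsep (h.1 k hk) (h'.1 k hk)⟩

variable [CompactSpace X] {f : ℕ → ℕ}

theorem sq_sum_le_sum_partFn (hT : Continuous T) (hK : ∀ x, |φ x| ≤ K)
    (htrans : NonUnifTrans T f η) (hg : HasVarBounds T φ g η) (hεη : 0 < ε - 2 * η)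
    {S : Finset X} (hS : IsSep T n ε ↑S) :
    (∑ x ∈ S, Real.exp (birkhoff T φ n x)) ^ 2 ≤ ∑ i ∈ Finset.range (f n + 1),
      Real.exp (2 * g n + i * K) * partFn T φ (2 * n + i) (ε - 2 * η) := by
  classical
  choose I hI Z hZ using htrans n
  have hZ : ∀ x y, Shadows T η n (I x y) (Z x y) x y := hZ
  have hfiber : ∀ i, ∑ p ∈ S ×ˢ S with I p.1 p.2 = i,
      Real.exp (birkhoff T φ n p.1) * Real.exp (birkhoff T φ n p.2)
        ≤ Real.exp (2 * g n + i * K) * partFn T φ (2 * n + i) (ε - 2 * η) := fun i => by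
    have hsep : ((S ×ˢ S).filter fun p => I p.1 p.2 = i : Set (X × X)).Pairwise fun p q =>
        ∃ k < 2 * n + i, ε - 2 * η < dist (T^[k] (Z p.1 p.2)) (T^[k] (Z q.1 q.2)) := by
      rintro ⟨x, y⟩ hp ⟨x', y'⟩ hq hne
      simp only [Finset.coe_filter, Finset.mem_product, Set.mem_ofPred_eq] at hp hq
      obtain ⟨⟨hx, hy⟩, rfl⟩ := hp
      obtain ⟨⟨hx', hy'⟩, hi⟩ := hq
      exact (hZ x y).exists_lt_dist hS hx hy hx' hy' hne (hi ▸ hZ x' y')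
    calc ∑ p ∈ S ×ˢ S with I p.1 p.2 = i,
          Real.exp (birkhoff T φ n p.1) * Real.exp (birkhoff T φ n p.2)
        ≤ ∑ p ∈ S ×ˢ S with I p.1 p.2 = i,
          Real.exp (2 * g n + i * K) * Real.exp (birkhoff T φ (2 * n + i) (Z p.1 p.2)) := by
          refine Finset.sum_le_sum fun p hp => ?_
          rw [← Real.exp_add, ← Real.exp_add, ← (Finset.mem_filter.mp hp).2]
          exact Real.exp_le_exp.mpr (by linarith [(hZ p.1 p.2).birkhoff_add_le hK hg])
      _ ≤ Real.exp (2 * g n + i * K) * partFn T φ (2 * n + i) (ε - 2 * η) := by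
          rw [← Finset.mul_sum]
          gcongr
          exact sum_comp_le_partFn hT hK hεη _ (fun p : X × X => Z p.1 p.2) hsep
  calc (∑ x ∈ S, Real.exp (birkhoff T φ n x)) ^ 2
      = ∑ p ∈ S ×ˢ S, Real.exp (birkhoff T φ n p.1) * Real.exp (birkhoff T φ n p.2) := by
        rw [sq, Finset.sum_mul_sum, Finset.sum_product]
    _ = ∑ i ∈ Finset.range (f n + 1), ∑ p ∈ S ×ˢ S with I p.1 p.2 = i,
          Real.exp (birkhoff T φ n p.1) * Real.exp (birkhoff T φ n p.2) :=
        (Finset.sum_fiberwise_of_maps_to (fun p _ => Finset.mem_range_succ_iff.mpr (hI _ _)) _).symm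
    _ ≤ _ := Finset.sum_le_sum fun i _ => hfiber i

theorem partFn_sq_le_sum (hT : Continuous T) (hK : ∀ x, |φ x| ≤ K)
    (htrans : NonUnifTrans T f η) (hg : HasVarBounds T φ g η) (hε : 0 < ε)
    (hεη : 0 < ε - 2 * η) (n : ℕ) :
    partFn T φ n ε ^ 2 ≤ ∑ i ∈ Finset.range (f n + 1),
      Real.exp (2 * g n + i * K) * partFn T φ (2 * n + i) (ε - 2 * η) := by
  have hR : 0 ≤ ∑ i ∈ Finset.range (f n + 1),
      Real.exp (2 * g n + i * K) * partFn T φ (2 * n + i) (ε - 2 * η) :=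
    Finset.sum_nonneg fun i _ => mul_nonneg (Real.exp_nonneg _) (partFn_nonneg hT hK hεη)
  have hsqrt := partFn_le_of_forall_sum_le fun S hS =>
    (Real.le_sqrt (Finset.sum_nonneg fun _ _ => (Real.exp_nonneg _)) hR).mpr
      (sq_sum_le_sum_partFn hT hK htrans hg hεη hS)
  calc partFn T φ n ε ^ 2 ≤ _ := pow_le_pow_left₀ (partFn_nonneg hT hK hε) hsqrt 2
    _ = _ := Real.sq_sqrt hR

end Shadowing

section Step

variable {X : Type*} [MetricSpace X] [CompactSpace X] [Nonempty X] {T : X ≃ₜ X} {φ : X → ℝ}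
  {f : ℕ → ℕ} {g : ℕ → ℝ} {δ K : ℝ} {N : ℕ}

theorem exists_partFn_sq_le_mul (hδ : 0 < δ) (hK : ∀ x, |φ x| ≤ K)
    (htrans : NonUnifTrans (⇑T) f (δ / 3)) (hg : HasVarBounds (⇑T) φ g (δ / 3))
    (hshift : ∀ m, partFn (⇑T) φ m (δ / 3) ≤ Real.exp (2 * N * K) * partFn (⇑T) φ (m + 2 * N) δ)
    (t : ℕ) : ∃ i ≤ f t, partFn (⇑T) φ t δ ^ 2 ≤ (f t + 1) *
      Real.exp (2 * g t + f t * K + 2 * N * K) * partFn (⇑T) φ (2 * t + (i + 2 * N)) δ := by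
  have hK0 : 0 ≤ K := (abs_nonneg _).trans (hK (Classical.arbitrary X))
  obtain ⟨i₀, hi₀, hmax⟩ := (Finset.range (f t + 1)).exists_max_image
    (fun i => partFn (⇑T) φ (2 * t + (i + 2 * N)) δ) Finset.nonempty_range_add_one
  refine ⟨i₀, Finset.mem_range_succ_iff.mp hi₀, ?_⟩
  have hglue := partFn_sq_le_sum T.continuous hK htrans hg hδ (by linarith) t
  rw [show δ - 2 * (δ / 3) = δ / 3 by ring] at hglue
  calc partFn (⇑T) φ t δ ^ 2
      ≤ ∑ i ∈ Finset.range (f t + 1),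
          Real.exp (2 * g t + i * K) * partFn (⇑T) φ (2 * t + i) (δ / 3) := hglue
    _ ≤ ∑ i ∈ Finset.range (f t + 1),
          Real.exp (2 * g t + f t * K + 2 * N * K) * partFn (⇑T) φ (2 * t + (i₀ + 2 * N)) δ := by
        refine Finset.sum_le_sum fun i hi => ?_
        have hif : (i : ℝ) ≤ f t := by exact_mod_cast Finset.mem_range_succ_iff.mp hi
        calc Real.exp (2 * g t + i * K) * partFn (⇑T) φ (2 * t + i) (δ / 3)
            ≤ Real.exp (2 * g t + i * K) * (Real.exp (2 * N * K) *
                partFn (⇑T) φ (2 * t + (i + 2 * N)) δ) := by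
              rw [← add_assoc]
              exact mul_le_mul_of_nonneg_left (hshift _) (Real.exp_nonneg _)
          _ ≤ _ := by
              rw [← mul_assoc, ← Real.exp_add]
              gcongr
              · exact (partFn_pos T.continuous hK _ hδ).le
              · exact hmax i hi
    _ = _ := by
        rw [Finset.sum_const, Finset.card_range, nsmul_eq_mul, mul_assoc]
        push_cast
        ring

theorem exists_partFn_sq_le {L : ℝ} (hδ : 0 < δ) (hK : ∀ x, |φ x| ≤ K)
    (htrans : NonUnifTrans (⇑T) f (δ / 3)) (hg : HasVarBounds (⇑T) φ g (δ / 3))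
    (hshift : ∀ m, partFn (⇑T) φ m (δ / 3) ≤ Real.exp (2 * N * K) * partFn (⇑T) φ (m + 2 * N) δ)
    {t : ℕ} (hfg : (f t : ℝ) + g t ≤ L) :
    ∃ j : ℕ, (j : ℝ) ≤ (2 + K) * L + 2 * N * (1 + K) ∧
      partFn (⇑T) φ t δ ^ 2
        ≤ Real.exp ((2 + K) * L + 2 * N * (1 + K)) * partFn (⇑T) φ (2 * t + j) δ := by
  have hK0 : 0 ≤ K := (abs_nonneg _).trans (hK (Classical.arbitrary X))
  have hg0 := hg.nonneg (⇑T) φ t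
  have hN0 : (0 : ℝ) ≤ N := Nat.cast_nonneg N
  obtain ⟨i, hi, hsq⟩ := exists_partFn_sq_le_mul hδ hK htrans hg hshift t
  have hif : (i : ℝ) ≤ f t := by exact_mod_cast hi
  refine ⟨i + 2 * N, ?_, hsq.trans ?_⟩
  · push_cast
    nlinarith [mul_nonneg hK0 (show 0 ≤ L by linarith), mul_nonneg hN0 hK0]
  gcongr
  · exact (partFn_pos T.continuous hK _ hδ).le
  calc (f t + 1) * Real.exp (2 * g t + f t * K + 2 * N * K)
      ≤ Real.exp (f t) * Real.exp (2 * g t + f t * K + 2 * N * K) := by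
        gcongr
        linarith [Real.add_one_le_exp (f t : ℝ)]
    _ ≤ _ := by
        rw [← Real.exp_add]
        apply Real.exp_le_exp.mpr
        nlinarith [mul_nonneg hK0 hg0]

end Step

section Doubling

open Real

def doublingOrbit (j : ℕ → ℕ) (n : ℕ) : ℕ → ℕ
  | 0 => n
  | k + 1 => 2 * doublingOrbit j n k + j (doublingOrbit j n k)

lemma sum_add_mul_div_two_pow (a b : ℝ) (k : ℕ) :
    ∑ t ∈ Finset.range k, (a + b * t) / 2 ^ (t + 1) = a + b - (a + b * (k + 1)) / 2 ^ k := by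
  induction k with
  | zero => simp
  | succ k ih =>
    rw [Finset.sum_range_succ, ih, pow_succ]
    push_cast
    field_simp
    ring

variable {j : ℕ → ℕ} {n : ℕ}

lemma two_pow_mul_le_doublingOrbit (k : ℕ) : 2 ^ k * n ≤ doublingOrbit j n k := by
  induction k with
  | zero => simp [doublingOrbit]
  | succ k ih => rw [doublingOrbit, pow_succ]; nlinarith

lemma le_doublingOrbit (k : ℕ) : n ≤ doublingOrbit j n k :=
  (Nat.le_mul_of_pos_left n (Nat.two_pow_pos k)).trans (two_pow_mul_le_doublingOrbit k)

variable {α β : ℝ} {M : ℕ}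

lemma log_doublingOrbit_le (hα : 0 ≤ α) (hβ : 0 ≤ β) (hM : 0 < M)
    (hj : ∀ t, M ≤ t → (j t : ℝ) ≤ α * log t + β) (hn : M ≤ n) (k : ℕ) :
    log (doublingOrbit j n k) ≤ log n + k * log (2 + α + β) := by
  induction k with
  | zero => simp [doublingOrbit]
  | succ k ih =>
    set m := doublingOrbit j n k
    have hm : (1 : ℝ) ≤ m := by exact_mod_cast hM.trans_le (hn.trans (le_doublingOrbit k))
    have hstep : (doublingOrbit j n (k + 1) : ℝ) ≤ (2 + α + β) * m := by
      have hjm := hj m (hn.trans (le_doublingOrbit k))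
      have hlog := Real.log_le_self (zero_le_one.trans hm)
      rw [doublingOrbit]
      push_cast
      nlinarith [mul_le_mul_of_nonneg_left hlog hα]
    calc log (doublingOrbit j n (k + 1)) ≤ log ((2 + α + β) * m) :=
          Real.log_le_log (by exact_mod_cast hM.trans_le (hn.trans (le_doublingOrbit _))) hstep
      _ = log (2 + α + β) + log m := Real.log_mul (by positivity) (by positivity)
      _ ≤ log n + (k + 1 : ℕ) * log (2 + α + β) := by push_cast; linarith

lemma sum_log_doublingOrbit_le (hα : 0 ≤ α) (hβ : 0 ≤ β) (hM : 0 < M)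
    (hj : ∀ t, M ≤ t → (j t : ℝ) ≤ α * log t + β) (hn : M ≤ n) (k : ℕ) :
    ∑ t ∈ Finset.range k, (α * log (doublingOrbit j n t) + β) / 2 ^ (t + 1)
      ≤ α * log n + β + α * log (2 + α + β) := by
  have hlogn : 0 ≤ log n := Real.log_nonneg (by exact_mod_cast hM.trans_le hn)
  have hlogc : 0 ≤ log (2 + α + β) := Real.log_nonneg (by linarith)
  calc ∑ t ∈ Finset.range k, (α * log (doublingOrbit j n t) + β) / 2 ^ (t + 1)
      ≤ ∑ t ∈ Finset.range k, ((α * log n + β) + α * log (2 + α + β) * t) / 2 ^ (t + 1) := by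
        refine Finset.sum_le_sum fun t _ => div_le_div_of_nonneg_right ?_ (by positivity)
        nlinarith [log_doublingOrbit_le hα hβ hM hj hn t]
    _ ≤ _ := by
        rw [sum_add_mul_div_two_pow]
        have : 0 ≤ (α * log n + β + α * log (2 + α + β) * (k + 1)) / 2 ^ k := by positivity
        linarith

lemma doublingOrbit_div_two_pow_le (hj : ∀ t, M ≤ t → (j t : ℝ) ≤ α * log t + β) (hn : M ≤ n)
    (k : ℕ) : (doublingOrbit j n k : ℝ) / 2 ^ k
      ≤ n + ∑ t ∈ Finset.range k, (α * log (doublingOrbit j n t) + β) / 2 ^ (t + 1) := by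
  induction k with
  | zero => simp [doublingOrbit]
  | succ k ih =>
    have hjk := hj _ (hn.trans (le_doublingOrbit (j := j) k))
    rw [Finset.sum_range_succ, doublingOrbit]
    have hsplit : ((2 * doublingOrbit j n k + j (doublingOrbit j n k) : ℕ) : ℝ) / 2 ^ (k + 1)
        = (doublingOrbit j n k : ℝ) / 2 ^ k + (j (doublingOrbit j n k) : ℝ) / 2 ^ (k + 1) := by
      push_cast
      field_simp
      ring
    rw [hsplit]
    have : (j (doublingOrbit j n k) : ℝ) / 2 ^ (k + 1)
        ≤ (α * log (doublingOrbit j n k) + β) / 2 ^ (k + 1) := by gcongr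
    linarith

theorem le_of_two_mul_le_add {a : ℕ → ℝ} (ha : Tendsto (fun t => a t / t) atTop (𝓝 0))
    (hα : 0 ≤ α) (hβ : 0 ≤ β) (hM : 0 < M)
    (h : ∀ t, M ≤ t → ∃ j : ℕ, (j : ℝ) ≤ α * log t + β ∧
      2 * a t ≤ a (2 * t + j) + (α * log t + β)) (hn : M ≤ n) :
    a n ≤ α * log n + β + α * log (2 + α + β) := by
  choose! j hj hstep using h
  set Γ := α * log n + β + α * log (2 + α + β)
  set m := doublingOrbit j n
  have hmM : ∀ k, M ≤ m k := fun k => hn.trans (le_doublingOrbit k)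
  have hsum := sum_log_doublingOrbit_le hα hβ hM hj hn
  have hiter : ∀ k, a n ≤ a (m k) / 2 ^ k
      + ∑ t ∈ Finset.range k, (α * log (m t) + β) / 2 ^ (t + 1) := by
    intro k
    induction k with
    | zero => simp [m, doublingOrbit]
    | succ k ih =>
      have hs : 2 * a (m k) ≤ a (m (k + 1)) + (α * log (m k) + β) := hstep _ (hmM k)
      have h2 : a (m k) / 2 ^ k ≤ (a (m (k + 1)) + (α * log (m k) + β)) / 2 ^ (k + 1) :=
        calc a (m k) / 2 ^ k = 2 * a (m k) / 2 ^ (k + 1) := by rw [pow_succ]; field_simp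
          _ ≤ _ := div_le_div_of_nonneg_right hs (by positivity)
      rw [add_div] at h2
      rw [Finset.sum_range_succ]
      linarith
  have hlim : Tendsto (fun k => a (m k) / 2 ^ k) atTop (𝓝 0) := by
    have hm : Tendsto m atTop atTop := tendsto_atTop_mono
      (fun k => (Nat.lt_two_pow_self).le.trans ((Nat.le_mul_of_pos_right _ (hM.trans_le hn)).trans
        (two_pow_mul_le_doublingOrbit k))) tendsto_id
    have hbdd : IsBoundedUnder (· ≤ ·) atTop (fun k => ‖(m k : ℝ) / 2 ^ k‖) :=
      isBoundedUnder_of ⟨n + Γ, fun k => by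
        rw [Real.norm_of_nonneg (by positivity)]
        linarith [doublingOrbit_div_two_pow_le hj hn k, hsum k]⟩
    refine ((ha.comp hm).zero_mul_isBoundedUnder_le hbdd).congr fun k => ?_
    have : (m k : ℝ) ≠ 0 := by exact_mod_cast (hM.trans_le (hmM k)).ne'
    simp only [Function.comp_apply]
    field_simp
  have := ge_of_tendsto' (hlim.add_const Γ) fun k => (hiter k).trans (by linarith [hsum k])
  linarith

theorem exists_le_mul_exp_mul_rpow_of_sq_le {Z : ℕ → ℝ} (hZ : ∀ t, 0 < Z t) {P α β : ℝ} {M : ℕ}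
    (hP : Tendsto (fun t : ℕ => log (Z t) / t) atTop (𝓝 P))
    (hα : 0 ≤ α) (hβ : 0 ≤ β) (hM : 0 < M)
    (h : ∀ t, M ≤ t → ∃ j : ℕ, (j : ℝ) ≤ α * log t + β ∧
      Z t ^ 2 ≤ exp (α * log t + β) * Z (2 * t + j)) :
    ∃ D, 0 < D ∧ ∀ n, M ≤ n → Z n ≤ D * exp (n * P) * (n : ℝ) ^ ((1 + |P|) * α) := by
  set α' := (1 + |P|) * α
  set β' := (1 + |P|) * β
  set a : ℕ → ℝ := fun t => log (Z t) - t * P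
  have ha : Tendsto (fun t => a t / t) atTop (𝓝 0) := by
    have hlim := hP.sub_const P
    rw [sub_self] at hlim
    refine hlim.congr' (eventually_atTop.mpr ⟨1, fun t ht => ?_⟩)
    have : (t : ℝ) ≠ 0 := by exact_mod_cast (Nat.one_le_iff_ne_zero.mp ht)
    simp only [a]
    field_simp
  have hstep : ∀ t, M ≤ t → ∃ j : ℕ, (j : ℝ) ≤ α' * log t + β' ∧
      2 * a t ≤ a (2 * t + j) + (α' * log t + β') := by
    intro t ht
    obtain ⟨j, hj, hsq⟩ := h t ht
    have hL : 0 ≤ α * log t + β := by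
      have := Real.log_nonneg (show (1 : ℝ) ≤ t by exact_mod_cast hM.trans_le ht)
      positivity
    have hlog : 2 * log (Z t) ≤ (α * log t + β) + log (Z (2 * t + j)) := by
      have := Real.log_le_log (by have := hZ t; positivity) hsq
      rwa [Real.log_pow, Real.log_mul (Real.exp_ne_zero _) (hZ _).ne', Real.log_exp] at this
    have hjP : j * P ≤ |P| * (α * log t + β) :=
      calc j * P ≤ j * |P| := mul_le_mul_of_nonneg_left (le_abs_self P) (Nat.cast_nonneg j)
        _ ≤ _ := by rw [mul_comm]; exact mul_le_mul_of_nonneg_left hj (abs_nonneg P)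
    refine ⟨j, by nlinarith [abs_nonneg P], ?_⟩
    simp only [a, α', β']
    push_cast
    nlinarith
  refine ⟨exp (β' + α' * log (2 + α' + β')), exp_pos _, fun n hn => ?_⟩
  have hbound := le_of_two_mul_le_add ha (by positivity) (by positivity) hM hstep hn
  have hn0 : (0 : ℝ) < n := by exact_mod_cast hM.trans_le hn
  calc Z n = exp (a n + n * P) := by simp only [a, sub_add_cancel, exp_log (hZ n)]
    _ ≤ exp (β' + α' * log (2 + α' + β') + n * P + log n * α') := by
        apply exp_le_exp.mpr
        linarith
    _ = _ := by rw [rpow_def_of_pos hn0, exp_add, exp_add]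

end Doubling

/-- Upper bound on the partition function under non-uniform transitivity:
if `f n + g n ≤ min (C ln n) n` for all `n ≥ M`, then
`Z(X,T,φ,n,δ) ≤ D · e^{n·P} · n^{C·E}` for all `n ≥ M`, with constants `D, E`. -/
theorem partFn_upper_bound_trans {X : Type*} [MetricSpace X] [CompactSpace X] [Nonempty X]
    (T : X ≃ₜ X) (δ : ℝ) (hδ : 0 < δ) (hexp : Expansive T δ)
    (f : ℕ → ℕ) (htrans : NonUnifTrans (⇑T) f (δ / 3))
    (φ : X → ℝ) (hφ : Continuous φ) (g : ℕ → ℝ)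
    (hg : HasVarBounds (⇑T) φ g (δ / 3))
    (P : ℝ)
    (hP : Tendsto (fun n : ℕ => Real.log (partFn (⇑T) φ n δ) / n) atTop (𝓝 P))
    (C : ℝ) (hC : 0 < C) (M : ℕ) (hM : 3 ≤ M)
    (hfg : ∀ n : ℕ, M ≤ n → (f n : ℝ) + g n ≤ min (C * Real.log n) (n : ℝ)) :
    ∃ D E : ℝ, 0 < D ∧ 0 < E ∧ ∀ n : ℕ, M ≤ n →
      partFn (⇑T) φ n δ ≤ D * Real.exp ((n : ℝ) * P) * (n : ℝ) ^ (C * E) := by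
  obtain ⟨K, hK⟩ := isCompact_univ.exists_bound_of_continuousOn hφ.continuousOn
  replace hK : ∀ x, |φ x| ≤ K := fun x => hK x trivial
  have hK0 : 0 ≤ K := (abs_nonneg _).trans (hK (Classical.arbitrary X))
  obtain ⟨N, hshift⟩ := hexp.exists_partFn_le (ε := δ / 3) hδ (by positivity) hK
  have hstep : ∀ t, M ≤ t → ∃ j : ℕ, (j : ℝ) ≤ (2 + K) * C * Real.log t + 2 * N * (1 + K) ∧
      partFn (⇑T) φ t δ ^ 2 ≤ Real.exp ((2 + K) * C * Real.log t + 2 * N * (1 + K))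
        * partFn (⇑T) φ (2 * t + j) δ := fun t ht => by
    simpa only [mul_assoc] using
      exists_partFn_sq_le hδ hK htrans hg hshift ((hfg t ht).trans (min_le_left _ _))
  obtain ⟨D, hD, hbound⟩ := exists_le_mul_exp_mul_rpow_of_sq_le
    (fun t => partFn_pos T.continuous hK t hδ) hP (by positivity) (by positivity) (by omega) hstep
  refine ⟨D, (1 + |P|) * (2 + K), hD, by positivity, fun n hn => (hbound n hn).trans_eq ?_⟩
  ring_nf
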